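/- The following are equivalent: (i) the Continuum Hypothesis 2^ℵ₀ = ℵ₁ holds; (ii) there exists an uncountable set F of entire functions (functions ℂ → ℂ analytic on all of ℂ) such that for every point z ∈ ℂ the set of values {f(z) : f ∈ F} is countable. Equivalently, the answer to Wetzel's problem (every family of analytic functions with pointwise countable value sets is countable) is affirmative if and only if the Continuum Hypothesis fails. -/

import Mathlib

/-!
If CH holds, enumerate `ℂ` as `(z_α)_{α < ω₁}` and fix a countable dense `D ⊆ ℂ`. By transfinite
recursion choose entire functions `f_α`, each different from all earlier `f_β`, with
`f_α (z_β) ∈ D` for `β ≤ α`. Such an `f_α` exists because countably many conditions "value in a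
dense set" and countably many functions to avoid can be met by a Newton series
`∑ cₙ ∏_{k<n} (z - w_k)` whose coefficients are chosen greedily and small enough for the series to
converge locally uniformly. At `z_β` the values of the family lie in `D ∪ {f_α (z_β) | α < β}`,
a countable set.

Conversely, two distinct entire functions agree only on a countable set. If `2^ℵ₀ > ℵ₁`, the
agreement sets of `ℵ₁` members of an uncountable family do not cover `ℂ`, and at a point outside
all of them these `ℵ₁` functions take pairwise distinct values.
-/

open Set Function Cardinal

universe u

theorem WellFoundedLT.exists_fun_of_forall_exists {ι α : Type*} [LT ι] [WellFoundedLT ι]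
    {p : ∀ x : ι, (∀ y < x, α) → α → Prop} (h : ∀ x prev, ∃ a, p x prev a) :
    ∃ c : ι → α, ∀ x, p x (fun y _ => c y) (c x) := by
  choose g hg using h
  refine ⟨IsWellFounded.fix (· < ·) g, fun x => ?_⟩
  rw [IsWellFounded.fix_eq]
  exact hg _ _

theorem Set.Countable.exists_injective_subset_range {α : Type*} [Infinite α] {A : Set α}
    (hA : A.Countable) : ∃ w : ℕ → α, Injective w ∧ A ⊆ range w := by
  set B := A ∪ range (_root_.Infinite.natEmbedding α)
  have : Countable B := (hA.union (countable_range _)).to_subtype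
  have : Infinite B := (infinite_range_of_injective (_root_.Infinite.natEmbedding α).injective).mono
    subset_union_right |>.to_subtype
  obtain ⟨e⟩ : Nonempty (ℕ ≃ B) := nonempty_equiv_of_countable
  exact ⟨(↑) ∘ e, Subtype.val_injective.comp e.injective,
    fun z hz => ⟨e.symm ⟨z, .inl hz⟩, by simp⟩⟩

theorem Dense.exists_norm_le_add_mul_mem {𝕜 : Type*} [NontriviallyNormedField 𝕜] {D : Set 𝕜}
    (hD : Dense D) (s : 𝕜) {c : 𝕜} (hc : c ≠ 0) {e : ℝ} (he : 0 < e) :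
    ∃ a, ‖a‖ ≤ e ∧ s + a * c ∈ D := by
  have hopen : IsOpenMap fun a : 𝕜 => s + a * c :=
    ((Homeomorph.mulRight₀ c hc).trans (Homeomorph.addLeft s)).isOpenMap
  obtain ⟨a, haD, ha⟩ := (hD.preimage hopen).exists_mem_open Metric.isOpen_ball
    ⟨0, Metric.mem_ball_self he⟩
  exact ⟨a, (mem_ball_zero_iff.1 ha).le, haD⟩

def newtonBasis (w : ℕ → ℂ) (n : ℕ) (z : ℂ) : ℂ := ∏ k ∈ Finset.range n, (z - w k)

/-- Chosen so that `newtonWeight w n * ‖newtonBasis w n z‖ ≤ 2⁻¹ ^ n` as soon as `‖z‖ ≤ n`. -/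
noncomputable def newtonWeight (w : ℕ → ℂ) (n : ℕ) : ℝ :=
  (2 ^ n * ∏ k ∈ Finset.range n, (n + 1 + ‖w k‖))⁻¹

section Newton

variable {w : ℕ → ℂ}

theorem differentiable_newtonBasis (w : ℕ → ℂ) (n : ℕ) : Differentiable ℂ (newtonBasis w n) :=
  Differentiable.fun_finsetProd fun _ _ => differentiable_id.sub_const _

theorem newtonBasis_apply_eq_zero {m n : ℕ} (h : m < n) : newtonBasis w n (w m) = 0 :=
  Finset.prod_eq_zero (Finset.mem_range.2 h) (sub_self _)

theorem newtonBasis_apply_self_ne_zero (hw : Injective w) (m : ℕ) :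
    newtonBasis w m (w m) ≠ 0 :=
  Finset.prod_ne_zero_iff.2 fun _ hk => sub_ne_zero.2 fun h =>
    (Finset.mem_range.1 hk).ne' (hw h)

theorem norm_newtonBasis_le (n : ℕ) {R : ℝ} {z : ℂ} (hz : ‖z‖ ≤ R) :
    ‖newtonBasis w n z‖ ≤ ∏ k ∈ Finset.range n, (R + ‖w k‖) := by
  rw [newtonBasis, norm_prod]
  exact Finset.prod_le_prod (fun _ _ => norm_nonneg _) fun k _ =>
    (norm_sub_le _ _).trans (by linarith)

theorem newtonWeight_pos (w : ℕ → ℂ) (n : ℕ) : 0 < newtonWeight w n := by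
  unfold newtonWeight; positivity

theorem newtonWeight_mul_prod_le {n : ℕ} {R : ℝ} (hR : 0 ≤ R) (hRn : R ≤ n) :
    newtonWeight w n * ∏ k ∈ Finset.range n, (R + ‖w k‖) ≤ 2⁻¹ ^ n := by
  have hprod : ∏ k ∈ Finset.range n, (R + ‖w k‖) ≤ ∏ k ∈ Finset.range n, (n + 1 + ‖w k‖) :=
    Finset.prod_le_prod (fun _ _ => by positivity) fun _ _ => by linarith
  rw [newtonWeight, mul_inv, inv_pow, mul_assoc]
  exact mul_le_of_le_one_right (by positivity) (inv_mul_le_one_of_le₀ hprod (by positivity))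

theorem summable_newtonWeight_mul_prod (w : ℕ → ℂ) {R : ℝ} (hR : 0 ≤ R) :
    Summable fun n => newtonWeight w n * ∏ k ∈ Finset.range n, (R + ‖w k‖) := by
  refine (summable_geometric_of_lt_one (by norm_num) (by norm_num : (2⁻¹ : ℝ) < 1))
    |>.of_norm_bounded_eventually_nat ?_
  filter_upwards [Filter.eventually_ge_atTop ⌈R⌉₊] with n hn
  rw [Real.norm_of_nonneg (by have := newtonWeight_pos w n; positivity)]
  exact newtonWeight_mul_prod_le hR ((Nat.le_ceil R).trans (by exact_mod_cast hn))

theorem differentiable_newtonSeries {c : ℕ → ℂ} (hc : ∀ n, ‖c n‖ ≤ newtonWeight w n) :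
    Differentiable ℂ fun z => ∑' n, c n * newtonBasis w n z := by
  intro z₀
  have hR : 0 ≤ ‖z₀‖ + 1 := by positivity
  refine (Complex.differentiableOn_tsum_of_summable_norm (summable_newtonWeight_mul_prod w hR)
    (fun n => ((differentiable_newtonBasis w n).const_mul _).differentiableOn)
    (Metric.isOpen_ball (x := 0) (ε := ‖z₀‖ + 1)) fun n z hz => ?_).differentiableAt
    (Metric.isOpen_ball.mem_nhds (by simp))
  rw [norm_mul]
  exact mul_le_mul (hc n) (norm_newtonBasis_le n (mem_ball_zero_iff.1 hz).le)
    (norm_nonneg _) (newtonWeight_pos w n).le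

theorem tsum_mul_newtonBasis_apply (c : ℕ → ℂ) (m : ℕ) :
    ∑' n, c n * newtonBasis w n (w m) = ∑ n ∈ Finset.range (m + 1), c n * newtonBasis w n (w m) :=
  tsum_eq_sum fun n hn => by
    rw [newtonBasis_apply_eq_zero (by simpa using hn), mul_zero]

/- The value at `w m` of the Newton series only involves `c 0, …, c m`, and `c m` enters through
the nonzero factor `newtonBasis w m (w m)`: this is what allows a greedy choice of `c m`. -/
theorem exists_differentiable_forall_apply_mem (hw : Injective w) {S : ℕ → Set ℂ}
    (hS : ∀ m, Dense (S m)) : ∃ f : ℂ → ℂ, Differentiable ℂ f ∧ ∀ m, f (w m) ∈ S m := by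
  obtain ⟨c, hc⟩ := WellFoundedLT.exists_fun_of_forall_exists
    (p := fun m prev a => ‖a‖ ≤ newtonWeight w m ∧
      (∑ i : Fin m, prev i i.2 * newtonBasis w i (w m)) + a * newtonBasis w m (w m) ∈ S m)
    fun m _ => (hS m).exists_norm_le_add_mul_mem _ (newtonBasis_apply_self_ne_zero hw m)
      (newtonWeight_pos w m)
  refine ⟨fun z => ∑' n, c n * newtonBasis w n z, differentiable_newtonSeries fun n => (hc n).1,
    fun m => ?_⟩
  have hm := (hc m).2
  rwa [Fin.sum_univ_eq_sum_range (fun n => c n * newtonBasis w n (w m)), ← Finset.sum_range_succ,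
    ← tsum_mul_newtonBasis_apply] at hm

end Newton

/- Enumerating `G` as `g 0, g 1, …`, the function is kept away from `g m` at the point `w m`. -/
theorem exists_differentiable_mapsTo_notMem {D : Set ℂ} (hD : Dense D) {A : Set ℂ}
    (hA : A.Countable) {G : Set (ℂ → ℂ)} (hG : G.Countable) :
    ∃ f : ℂ → ℂ, Differentiable ℂ f ∧ MapsTo f A D ∧ f ∉ G := by
  obtain ⟨w, hw, hAw⟩ := hA.exists_injective_subset_range
  obtain ⟨g, hGg⟩ := countable_iff_exists_subset_range.1 hG
  obtain ⟨f, hf, hfw⟩ := exists_differentiable_forall_apply_mem hw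
    (S := fun m => D \ {g m (w m)}) fun m => hD.sdiff_singleton _
  refine ⟨f, hf, fun z hz => ?_, fun hfG => ?_⟩
  · obtain ⟨m, rfl⟩ := hAw hz
    exact (hfw m).1
  · obtain ⟨m, rfl⟩ := hGg hfG
    exact (hfw m).2 rfl

theorem exists_injective_differentiable_countable_range_apply {ι : Type*} [LinearOrder ι]
    [WellFoundedLT ι] (hIio : ∀ x : ι, (Iio x).Countable) {b : ι → ℂ} (hb : Surjective b) :
    ∃ f : ι → ℂ → ℂ, Injective f ∧ (∀ x, Differentiable ℂ (f x)) ∧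
      ∀ z, (range fun x => f x z).Countable := by
  obtain ⟨D, hDc, hD⟩ := TopologicalSpace.exists_countable_dense ℂ
  have hIic (x : ι) : (Iic x).Countable := by simpa only [Iio_insert] using (hIio x).insert x
  obtain ⟨f, hf⟩ := WellFoundedLT.exists_fun_of_forall_exists
    (p := fun x prev g => Differentiable ℂ g ∧ MapsTo g (b '' Iic x) D ∧
      g ∉ range fun y : Iio x => prev y y.2)
    fun x _ =>
      have := (hIio x).to_subtype
      exists_differentiable_mapsTo_notMem hD ((hIic x).image b) (countable_range _)
  have hne {x y : ι} (h : y < x) : f y ≠ f x := fun heq => (hf x).2.2 ⟨⟨y, h⟩, heq⟩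
  refine ⟨f, fun x y hxy => ?_, fun x => (hf x).1, fun z => ?_⟩
  · rcases lt_trichotomy x y with h | h | h
    exacts [(hne h hxy).elim, h, (hne h hxy.symm).elim]
  obtain ⟨x, rfl⟩ := hb z
  refine (hDc.union ((hIio x).image fun y => f y (b x))).mono ?_
  rintro _ ⟨y, rfl⟩
  rcases lt_or_ge y x with hyx | hxy
  · exact .inr ⟨y, hyx, rfl⟩
  · exact .inl ((hf y).2.1 ⟨x, hxy, rfl⟩)

theorem Differentiable.countable_setOf_eq {E : Type*} [NormedAddCommGroup E] [NormedSpace ℂ E]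
    [CompleteSpace E] {f g : ℂ → E} (hf : Differentiable ℂ f) (hg : Differentiable ℂ g)
    (hfg : f ≠ g) : {z | f z = g z}.Countable := by
  have hf' := Complex.analyticOnNhd_univ_iff_differentiable.2 hf
  have hg' := Complex.analyticOnNhd_univ_iff_differentiable.2 hg
  have hne : ∀ᶠ z in Filter.codiscreteWithin univ, f z ≠ g z :=
    (hf'.eqOn_or_eventually_ne_of_preconnected hg' isPreconnected_univ).resolve_left
      fun h => hfg (funext fun z => h (mem_univ z))
  simpa using (HereditarilyLindelofSpace.isLindelof _).countable_of_isDiscrete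
    (isDiscrete_of_codiscreteWithin (s := {z | f z = g z}) hne)

theorem exists_injOn_apply_of_mk_lt {α β : Type u} {S : Set (α → β)} {κ : Cardinal.{u}}
    (hκ : ℵ₀ ≤ κ) (hS : #S ≤ κ) (hα : κ < #α)
    (hagree : S.Pairwise fun f g => {x | f x = g x}.Countable) :
    ∃ x, InjOn (fun f => f x) S := by
  let P := {p : S × S // p.1 ≠ p.2}
  let E : Set α := ⋃ p : P, {x | p.1.1.1 x = p.1.2.1 x}
  have hP : #P ≤ κ := calc
    #P ≤ #(S × S) := mk_subtype_le _
    _ ≤ κ * κ := by rw [mk_prod, lift_id]; exact mul_le_mul' hS hS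
    _ = κ := mul_eq_self hκ
  have hE : #E ≤ κ := calc
    #E ≤ #P * ⨆ p : P, #{x | p.1.1.1 x = p.1.2.1 x} := mk_iUnion_le _
    _ ≤ κ * ℵ₀ := mul_le_mul' hP <| ciSup_le' fun p => le_aleph0_iff_set_countable.2 <|
      hagree p.1.1.2 p.1.2.2 (Subtype.coe_injective.ne p.2)
    _ = κ := mul_aleph0_eq hκ
  obtain ⟨x, hx⟩ : ∃ x, x ∉ E := by
    by_contra! h
    rw [eq_univ_of_forall h, mk_univ] at hE
    exact hE.not_gt hα
  refine ⟨x, fun f hf g hg hfg => by_contra fun hne => hx (mem_iUnion.2 ?_)⟩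
  exact ⟨⟨(⟨f, hf⟩, ⟨g, hg⟩), by simpa using hne⟩, hfg⟩

theorem mk_le_aleph_one_of_countable_image_apply {α β : Type u} {F : Set (α → β)}
    (hagree : F.Pairwise fun f g => {x | f x = g x}.Countable) (hF : ¬F.Countable)
    (hval : ∀ x, ((fun f => f x) '' F).Countable) : #α ≤ ℵ₁ := by
  by_contra! hα
  obtain ⟨S, hSF, hS⟩ := le_mk_iff_exists_subset.1 <| aleph_one_le_iff.2 <|
    not_le.1 (mt le_aleph0_iff_set_countable.1 hF)
  obtain ⟨x, hx⟩ := exists_injOn_apply_of_mk_lt (aleph0_le_aleph 1) hS.le hα (hagree.mono hSF)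
  have : #S ≤ ℵ₀ := calc
    #S = #((fun f => f x) '' S) := (mk_image_eq_of_injOn _ _ hx).symm
    _ ≤ #((fun f => f x) '' F) := mk_le_mk_of_subset (image_mono hSF)
    _ ≤ ℵ₀ := le_aleph0_iff_set_countable.2 (hval x)
  exact (hS ▸ this).not_gt aleph0_lt_aleph_one

theorem two_power_aleph0_eq_aleph_one_iff : (2 : Cardinal.{u}) ^ ℵ₀ = ℵ₁ ↔ #ℂ = ℵ₁ := by
  rw [two_power_aleph0, mk_complex, ← lift_continuum.{u, 0}, lift_eq_aleph_one]

theorem countable_Iio_toType_ord_aleph_one (x : (ℵ₁ : Cardinal.{u}).ord.ToType) :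
    (Iio x).Countable :=
  le_aleph0_iff_set_countable.1 <| lt_aleph_one_iff.1 <| by simpa using mk_Iio_lt x

/-- Erdős' theorem: the Continuum Hypothesis holds if and only if there exists
an uncountable family of entire functions whose set of values at each point of
`ℂ` is countable. Equivalently, the answer to Wetzel's problem is affirmative
iff CH fails. -/
theorem CH_iff_exists_uncountable_family :
    (2 : Cardinal) ^ Cardinal.aleph0 = Cardinal.aleph 1 ↔
      ∃ F : Set (ℂ → ℂ),
        (∀ f ∈ F, Differentiable ℂ f) ∧
        ¬ F.Countable ∧
        ∀ z : ℂ, ((fun f : ℂ → ℂ => f z) '' F).Countable := by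
  rw [two_power_aleph0_eq_aleph_one_iff]
  constructor
  · intro hCH
    obtain ⟨b⟩ : Nonempty ((ℵ₁ : Cardinal.{0}).ord.ToType ≃ ℂ) := Cardinal.eq.1 (by simp [hCH])
    have : Uncountable (ℵ₁ : Cardinal.{0}).ord.ToType := aleph0_lt_mk_iff.1 (by simp)
    obtain ⟨f, hf, hdiff, hval⟩ := exists_injective_differentiable_countable_range_apply
      countable_Iio_toType_ord_aleph_one b.surjective
    refine ⟨range f, forall_mem_range.2 hdiff, fun h => ?_, fun z => ?_⟩
    · exact not_countable (countable_univ_iff.1 (preimage_range f ▸ h.preimage hf))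
    · rw [← range_comp]
      exact hval z
  · rintro ⟨F, hdiff, hF, hval⟩
    refine le_antisymm ?_ (mk_complex ▸ aleph_one_le_continuum)
    exact mk_le_aleph_one_of_countable_image_apply
      (fun f hf g hg => (hdiff f hf).countable_setOf_eq (hdiff g hg)) hF hval
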